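/- arXiv:2103.05172 — 9 statements merged into one kernel-verified Lean document; each statement's English description precedes it below -/
import Mathlib

section
/- Let G = (V, E) be a strongly connected digraph on n ≥ 2 nodes (no self-loops), let D⁺_j denote the out-degree of node j, and let D⁺_max = max_j D⁺_j. Define the n×n real matrix B by B l j = 1/(1 + D⁺_j) if l = j or there is an edge from j to l, and B l j = 0 otherwise. Then for every pair of nodes i, j, the (i,j) entry of the matrix power B^(n−1) satisfies (B^(n−1)) i j ≥ (1 + D⁺_max)^(−(n−1)) > 0. (This is the matrix form of Lemma 1: the probability that a token started at node j and moved at each step according to the column-stochastic transition probabilities b_{lj} is at node i after exactly n−1 steps is at least (1 + D⁺_max)^(−(n−1)).) -/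
/-!
Every entry of `B` on the diagonal or on an edge is at least `c = (1 + D⁺_max)⁻¹`, so a walk of
length `k` from `j` to `i` in the reflexive closure of the edge relation contributes at least
`c ^ k` to the nonnegative sum `(B ^ k) i j`. Such a walk of length exactly `n - 1` always exists:
the set of nodes reachable in `k` steps grows with `k` (pad with a loop), and it grows strictly
until it is closed under edges, hence until it contains every node.
-/

namespace Relation

variable {α : Type*} {r : α → α → Prop}

def HasWalk (r : α → α → Prop) : ℕ → α → α → Prop
  | 0 => Eq
  | k + 1 => Comp r (HasWalk r k)

theorem HasWalk.succ_of_reflexive (hr : ∀ a, r a a) {k : ℕ} {a b : α} (h : HasWalk r k a b) :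
    HasWalk r (k + 1) a b :=
  ⟨a, hr a, h⟩

theorem hasWalk_self (hr : ∀ a, r a a) (a : α) : ∀ k, HasWalk r k a a
  | 0 => rfl
  | k + 1 => (hasWalk_self hr a k).succ_of_reflexive hr

theorem HasWalk.snoc {k : ℕ} {a b c : α} (h : HasWalk r k a b) (hbc : r b c) :
    HasWalk r (k + 1) a c := by
  induction k generalizing a with
  | zero => exact ⟨c, h ▸ hbc, rfl⟩
  | succ k ih =>
    obtain ⟨m, ham, hmb⟩ := h
    exact ⟨m, ham, ih hmb⟩

theorem succ_le_ncard_hasWalk_or_forall_hasWalk [Finite α] (hr : ∀ a, r a a) (a : α) (k : ℕ) :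
    k + 1 ≤ {x | HasWalk r k a x}.ncard ∨ ∀ b, ReflTransGen r a b → HasWalk r k a b := by
  induction k with
  | zero => exact Or.inl ((Set.ncard_pos).2 ⟨a, rfl⟩)
  | succ k ih =>
    rcases ih with hcard | hreach
    · by_cases hstable : {x | HasWalk r (k + 1) a x} ⊆ {x | HasWalk r k a x}
      · refine Or.inr fun b hb => HasWalk.succ_of_reflexive hr ?_
        induction hb with
        | refl => exact hasWalk_self hr a k
        | tail _ hyz ih => exact hstable (ih.snoc hyz)
      · have hgrow : {x | HasWalk r k a x} ⊂ {x | HasWalk r (k + 1) a x} :=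
          ⟨fun _ hx => HasWalk.succ_of_reflexive hr hx, hstable⟩
        have := Set.ncard_lt_ncard hgrow
        exact Or.inl (by omega)
    · exact Or.inr fun b hb => (hreach b hb).succ_of_reflexive hr

theorem ReflTransGen.hasWalk_card_sub_one [Finite α] (hr : ∀ a, r a a) {a b : α}
    (h : ReflTransGen r a b) : HasWalk r (Nat.card α - 1) a b := by
  rcases succ_le_ncard_hasWalk_or_forall_hasWalk hr a (Nat.card α - 1) with hcard | hreach
  · have hall : {x | HasWalk r (Nat.card α - 1) a x} = Set.univ :=
      Set.eq_of_subset_of_ncard_le (Set.subset_univ _) (by rw [Set.ncard_univ]; omega)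
    exact (Set.ext_iff.1 hall b).2 trivial
  · exact hreach b h

end Relation

open Relation in
theorem Matrix.pow_le_pow_apply_of_hasWalk {ι R : Type*} [Fintype ι] [DecidableEq ι]
    [Semiring R] [PartialOrder R] [IsOrderedRing R] {B : Matrix ι ι R} {r : ι → ι → Prop}
    {c : R} (hB : ∀ i j, 0 ≤ B i j) (hc : 0 ≤ c) (hcB : ∀ i j, r i j → c ≤ B i j) {k : ℕ}
    {i j : ι} (h : HasWalk r k i j) : c ^ k ≤ (B ^ k) i j := by
  induction k generalizing i with
  | zero => cases h; simp
  | succ k ih =>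
    obtain ⟨m, him, hmj⟩ := h
    calc c ^ (k + 1) = c * c ^ k := pow_succ' c k
      _ ≤ B i m * (B ^ k) m j := mul_le_mul (hcB i m him) (ih hmj) (pow_nonneg hc k) (hB i m)
      _ ≤ ∑ l, B i l * (B ^ k) l j :=
        Finset.single_le_sum (fun l _ => mul_nonneg (hB i l) (pow_apply_nonneg hB k l j))
          (Finset.mem_univ m)
      _ = (B ^ (k + 1)) i j := by rw [pow_succ', Matrix.mul_apply]

open Relation in
theorem stmt_0_general (n : ℕ) (E : Fin n → Fin n → Prop) [DecidableRel E]
    (hconn : ∀ i j : Fin n, i ≠ j → Relation.TransGen E j i)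
    (Dplus : Fin n → ℕ)
    (Dmax : ℕ) (hDmax : Dmax = Finset.univ.sup Dplus)
    (B : Matrix (Fin n) (Fin n) ℝ)
    (hB : ∀ l j, B l j = if l = j ∨ E l j then (1 + (Dplus j : ℝ))⁻¹ else 0) :
    ∀ i j : Fin n, (0 : ℝ) < (1 + (Dmax : ℝ)) ^ (-((n : ℤ) - 1)) ∧
      (1 + (Dmax : ℝ)) ^ (-((n : ℤ) - 1)) ≤ (B ^ (n - 1)) i j := by
  intro i j
  set c : ℝ := (1 + (Dmax : ℝ))⁻¹ with hc_def
  have hc : 0 < c := by positivity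
  have hBnn : ∀ l m, 0 ≤ B l m := fun l m => by rw [hB]; split_ifs <;> positivity
  let r : Fin n → Fin n → Prop := fun a b => a = b ∨ E a b
  have hcB : ∀ l m, r l m → c ≤ B l m := by
    intro l m hlm
    have hDm : (Dplus m : ℝ) ≤ Dmax := by
      exact_mod_cast hDmax ▸ Finset.le_sup (f := Dplus) (Finset.mem_univ m)
    rw [hB, if_pos hlm]
    exact inv_anti₀ (by positivity) (by linarith)
  have hreach : ReflTransGen r i j := by
    rcases eq_or_ne i j with rfl | hij
    · exact .refl
    · exact ReflTransGen.mono (fun _ _ => Or.inr) _ _ (hconn j i hij.symm).to_reflTransGen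
  have hwalk : HasWalk r (n - 1) i j := by
    simpa using hreach.hasWalk_card_sub_one (r := r) fun _ => Or.inl rfl
  have hpow : (1 + (Dmax : ℝ)) ^ (-((n : ℤ) - 1)) = c ^ (n - 1) := by
    rw [hc_def, inv_pow, ← zpow_natCast, ← zpow_neg, Nat.cast_sub i.pos, Nat.cast_one]
  rw [hpow]
  exact ⟨pow_pos hc _, Matrix.pow_le_pow_apply_of_hasWalk hBnn hc.le hcB hwalk⟩

/-- Lemma 1 (matrix form): for the column-stochastic matrix `B` of the token random walk on a
strongly connected digraph on `n ≥ 2` nodes, every entry of `B ^ (n-1)` is at least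
`(1 + D⁺_max)^(-(n-1)) > 0`. -/
theorem stmt_0 (n : ℕ) (hn : 2 ≤ n) (E : Fin n → Fin n → Prop) [DecidableRel E]
    (hirr : ∀ j, ¬ E j j)
    (hconn : ∀ i j : Fin n, i ≠ j → Relation.TransGen E j i)
    (Dplus : Fin n → ℕ)
    (hD : ∀ j, Dplus j = (Finset.univ.filter (fun l => E l j)).card)
    (Dmax : ℕ) (hDmax : Dmax = Finset.univ.sup Dplus)
    (B : Matrix (Fin n) (Fin n) ℝ)
    (hB : ∀ l j, B l j = if l = j ∨ E l j then (1 + (Dplus j : ℝ))⁻¹ else 0) :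
    ∀ i j : Fin n, (0 : ℝ) < (1 + (Dmax : ℝ)) ^ (-((n : ℤ) - 1)) ∧
      (1 + (Dmax : ℝ)) ^ (-((n : ℤ) - 1)) ≤ (B ^ (n - 1)) i j :=
  stmt_0_general n E hconn Dplus Dmax hDmax B hB
end

section
/- Let B be an n×n column-stochastic real matrix (n ≥ 2), fix a node i, and let p be a real number with 0 < p ≤ 1 such that (B^(n−1)) i j ≥ p for every column j. Let Q be the matrix obtained from B by replacing row i and column i with zeros. Then for every natural number τ and every column j ≠ i, the column sum Σ_l (Q^(τ(n−1))) l j is at most (1 − p)^τ. (This captures the claim that the probability that a Markov-chain token started at j has not visited node i during τ(n−1) steps is at most (1 − p)^τ.) -/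
/-!
Removing row and column `i` can only decrease the entries of every power, and after one step
the token of the taboo chain never sits at `i`. Hence a column sum of `Q ^ (n - 1)` is at most
the mass that `B ^ (n - 1)` puts outside `i`, namely `1 - (B ^ (n - 1)) i j ≤ 1 - p`. A uniform
bound `c` on the column sums of a nonnegative matrix gives the bound `c ^ τ` for its `τ`-th power.
-/

open Finset

namespace Matrix

variable {ι R : Type*}

section OrderedSemiring

variable [Fintype ι] [Semiring R] [PartialOrder R] [IsOrderedRing R]

theorem sum_mul_apply_le {A B : Matrix ι ι R} {c : R} (hA : ∀ m, ∑ l, A l m ≤ c)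
    (hB : ∀ m j, 0 ≤ B m j) (j : ι) : ∑ l, (A * B) l j ≤ c * ∑ m, B m j := by
  calc ∑ l, (A * B) l j = ∑ m, (∑ l, A l m) * B m j := by
        simp only [mul_apply, sum_mul]
        exact sum_comm
    _ ≤ ∑ m, c * B m j := sum_le_sum fun m _ => mul_le_mul_of_nonneg_right (hA m) (hB m j)
    _ = c * ∑ m, B m j := (mul_sum ..).symm

variable [DecidableEq ι]

theorem pow_apply_le_pow_apply {A B : Matrix ι ι R} (hA : ∀ l j, 0 ≤ A l j)
    (hAB : ∀ l j, A l j ≤ B l j) (k : ℕ) (l j : ι) : (A ^ k) l j ≤ (B ^ k) l j := by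
  have hB : ∀ l j, 0 ≤ B l j := fun l j => (hA l j).trans (hAB l j)
  induction k generalizing l j with
  | zero => rfl
  | succ k ih =>
    rw [pow_succ, mul_apply, pow_succ, mul_apply]
    exact sum_le_sum fun m _ =>
      mul_le_mul (ih l m) (hAB m j) (hA m j) (pow_apply_nonneg hB k l m)

theorem sum_pow_apply_le_pow {A : Matrix ι ι R} {c : R} (hA : ∀ l j, 0 ≤ A l j)
    (hc : ∀ m, ∑ l, A l m ≤ c) (hc0 : 0 ≤ c) (k : ℕ) (j : ι) : ∑ l, (A ^ k) l j ≤ c ^ k := by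
  induction k generalizing j with
  | zero => simp [one_apply]
  | succ k ih =>
    calc ∑ l, (A ^ (k + 1)) l j = ∑ l, (A * A ^ k) l j := by rw [pow_succ']
      _ ≤ c * ∑ m, (A ^ k) m j := sum_mul_apply_le hc (pow_apply_nonneg hA k) j
      _ ≤ c * c ^ k := mul_le_mul_of_nonneg_left (ih j) hc0
      _ = c ^ (k + 1) := (pow_succ' c k).symm

end OrderedSemiring

section Taboo

variable [DecidableEq ι] [Semiring R]

def taboo (B : Matrix ι ι R) (i : ι) : Matrix ι ι R :=
  of fun l j => if l = i ∨ j = i then 0 else B l j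

@[simp]
theorem taboo_apply (B : Matrix ι ι R) (i l j : ι) :
    taboo B i l j = if l = i ∨ j = i then 0 else B l j :=
  rfl

theorem pow_succ_taboo_apply_self_left [Fintype ι] (B : Matrix ι ι R) (i : ι) (k : ℕ) (j : ι) :
    (taboo B i ^ (k + 1)) i j = 0 := by
  rw [pow_succ', mul_apply]
  exact sum_eq_zero fun m _ => by simp

variable [PartialOrder R] {B : Matrix ι ι R}

theorem taboo_apply_nonneg (hB : ∀ l j, 0 ≤ B l j) (i l j : ι) : 0 ≤ taboo B i l j := by
  rw [taboo_apply]; split <;> simp [hB]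

theorem taboo_apply_le (hB : ∀ l j, 0 ≤ B l j) (i l j : ι) : taboo B i l j ≤ B l j := by
  rw [taboo_apply]; split <;> simp [hB]

end Taboo

theorem sum_pow_succ_taboo_apply_le [Fintype ι] [DecidableEq ι] [Ring R] [PartialOrder R]
    [IsOrderedRing R] {B : Matrix ι ι R} (hB : B ∈ colStochastic R ι) (i : ι) (k : ℕ) (j : ι) :
    ∑ l, (taboo B i ^ (k + 1)) l j ≤ 1 - (B ^ (k + 1)) i j := by
  have hB0 : ∀ l j, 0 ≤ B l j := fun l j => nonneg_of_mem_colStochastic hB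
  have hcol : ∑ l, (B ^ (k + 1)) l j = 1 :=
    sum_col_of_mem_colStochastic (pow_mem hB (k + 1)) j
  rw [← add_sum_erase _ _ (mem_univ i), pow_succ_taboo_apply_self_left, zero_add,
    ← hcol, ← add_sum_erase _ _ (mem_univ i), add_sub_cancel_left]
  exact sum_le_sum fun l _ =>
    pow_apply_le_pow_apply (taboo_apply_nonneg hB0 i) (taboo_apply_le hB0 i) _ l j

end Matrix

open Matrix

theorem stmt_4_general (n : ℕ) (hn : 2 ≤ n) (B : Matrix (Fin n) (Fin n) ℝ)
    (hnonneg : ∀ l j, 0 ≤ B l j) (hcol : ∀ j, ∑ l, B l j = 1)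
    (i : Fin n) (p : ℝ) (hp1 : p ≤ 1)
    (hpow : ∀ j, p ≤ (B ^ (n - 1)) i j)
    (Q : Matrix (Fin n) (Fin n) ℝ)
    (hQ : ∀ l j, Q l j = if l = i ∨ j = i then 0 else B l j) :
    ∀ (τ : ℕ) (j : Fin n), j ≠ i → ∑ l, (Q ^ (τ * (n - 1))) l j ≤ (1 - p) ^ τ := by
  intro τ j _
  have hB : B ∈ colStochastic ℝ (Fin n) := mem_colStochastic_iff_sum.2 ⟨hnonneg, hcol⟩
  obtain rfl : Q = taboo B i := ext hQ
  obtain ⟨k, hk⟩ : ∃ k, n - 1 = k + 1 := ⟨n - 2, by omega⟩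
  have hstep (m : Fin n) : ∑ l, (taboo B i ^ (n - 1)) l m ≤ 1 - p := by
    rw [hk]
    linarith [sum_pow_succ_taboo_apply_le hB i k m, hk ▸ hpow m]
  rw [Nat.mul_comm, pow_mul]
  exact sum_pow_apply_le_pow (pow_apply_nonneg (taboo_apply_nonneg hnonneg i) _) hstep
    (by linarith) τ j

/-- Taboo-probability bound: if every entry of row `i` of `B^(n-1)` is at least `p`, and `Q`
is `B` with row `i` and column `i` zeroed out, then for every `τ` and every `j ≠ i` the
column sum of `Q^(τ(n-1))` at `j` is at most `(1 - p)^τ`. -/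
theorem stmt_4 (n : ℕ) (hn : 2 ≤ n) (B : Matrix (Fin n) (Fin n) ℝ)
    (hnonneg : ∀ l j, 0 ≤ B l j) (hcol : ∀ j, ∑ l, B l j = 1)
    (i : Fin n) (p : ℝ) (hp0 : 0 < p) (hp1 : p ≤ 1)
    (hpow : ∀ j, p ≤ (B ^ (n - 1)) i j)
    (Q : Matrix (Fin n) (Fin n) ℝ)
    (hQ : ∀ l j, Q l j = if l = i ∨ j = i then 0 else B l j) :
    ∀ (τ : ℕ) (j : Fin n), j ≠ i → ∑ l, (Q ^ (τ * (n - 1))) l j ≤ (1 - p) ^ τ :=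
  stmt_4_general n hn B hnonneg hcol i p hp1 hpow Q hQ
end

section
/- Let L, a, b be integers, and let a' = ⌈(a+b)/2⌉ and b' = ⌊(a+b)/2⌋ be the near-averages of a and b. Then (Y₁(a') + Y₂(a')) + (Y₁(b') + Y₂(b')) ≤ (Y₁(a) + Y₂(a)) + (Y₁(b) + Y₂(b)), where Y₁(x) = max(x − (L+1), 0) and Y₂(x) = max(L − x, 0). (Replacing two token values by their near-averages never increases the Lyapunov function Y = Y₁ + Y₂.) -/
/-!
`Y x = max (x - (L + 1)) 0 + max (L - x) 0` is the restriction to `ℤ` of a convex function on `ℚ`,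
and the near-averages `a', b'` have the same sum as `a, b` and lie between them. For a convex `f`,
pulling two points towards each other at fixed sum cannot increase `f a + f b`.
-/

open Set

section Convexity

variable {𝕜 β : Type*} [Field 𝕜] [LinearOrder 𝕜] [IsStrictOrderedRing 𝕜]
  [AddCommGroup β] [PartialOrder β] [IsOrderedAddMonoid β] [Module 𝕜 β]

theorem ConvexOn.map_add_map_le_of_add_eq {s : Set 𝕜} {f : 𝕜 → β} (hf : ConvexOn 𝕜 s f)
    {a b p q : 𝕜} (ha : a ∈ s) (hb : b ∈ s) (hp : p ∈ uIcc a b) (hpq : p + q = a + b) :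
    f p + f q ≤ f a + f b := by
  rw [← segment_eq_uIcc] at hp
  obtain ⟨θ, η, hθ, hη, hθη, rfl⟩ := hp
  have hq : q = η • a + θ • b := by
    simp only [smul_eq_mul] at hpq ⊢
    linear_combination hpq - (a + b) * hθη
  calc f (θ • a + η • b) + f q ≤ (θ • f a + η • f b) + (η • f a + θ • f b) := by
        rw [hq]
        exact add_le_add (hf.2 ha hb hθ hη hθη) (hf.2 ha hb hη hθ (by rw [add_comm, hθη]))
    _ = f a + f b := by linear_combination (norm := module) hθη • (f a + f b)

end Convexity

theorem convexOn_max_sub_add_max_sub {𝕜 : Type*} [Field 𝕜] [LinearOrder 𝕜]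
    [IsStrictOrderedRing 𝕜] (c d : 𝕜) :
    ConvexOn 𝕜 univ fun x => max (x - c) 0 + max (d - x) 0 := by
  have hcvx := convex_univ (𝕜 := 𝕜) (E := 𝕜)
  refine ConvexOn.add (ConvexOn.sup ?_ ?_) (ConvexOn.sup ?_ ?_)
  · exact (convexOn_id hcvx).sub (concaveOn_const c hcvx)
  · exact convexOn_const 0 hcvx
  · exact (convexOn_const d hcvx).sub (concaveOn_id hcvx)
  · exact convexOn_const 0 hcvx

/-- Replacing two token values by their near-averages never increases the Lyapunov
function `Y = Y₁ + Y₂`, where `Y₁(x) = max(x - (L+1), 0)` and `Y₂(x) = max(L - x, 0)`. -/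
theorem stmt_5 (L a b : ℤ) (a' b' : ℤ)
    (ha' : a' = ⌈((a : ℚ) + (b : ℚ)) / 2⌉) (hb' : b' = ⌊((a : ℚ) + (b : ℚ)) / 2⌋) :
    (max (a' - (L + 1)) 0 + max (L - a') 0) + (max (b' - (L + 1)) 0 + max (L - b') 0) ≤
      (max (a - (L + 1)) 0 + max (L - a) 0) + (max (b - (L + 1)) 0 + max (L - b) 0) := by
  have hmid : ((a : ℚ) + b) / 2 = ((a + b : ℤ) : ℚ) / (2 : ℕ) := by push_cast; ring
  rw [hmid, Rat.ceil_intCast_div_natCast] at ha'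
  rw [hmid, Rat.floor_intCast_div_natCast] at hb'
  have hsum : (a' : ℚ) + b' = a + b := by exact_mod_cast (by omega : a' + b' = a + b)
  have hmem : (a' : ℚ) ∈ uIcc (a : ℚ) b := by
    rw [mem_uIcc]
    exact_mod_cast (by omega : a ≤ a' ∧ a' ≤ b ∨ b ≤ a' ∧ a' ≤ a)
  exact_mod_cast (convexOn_max_sub_add_max_sub ((L : ℚ) + 1) L).map_add_map_le_of_add_eq
    (mem_univ _) (mem_univ _) hmem hsum
end

section
/- Let L, a, b be integers with a ≥ L + 2 and b ≤ L, and let a' = ⌈(a+b)/2⌉ and b' = ⌊(a+b)/2⌋ be the near-averages of a and b. Then Y₁(a') + Y₁(b') ≤ Y₁(a) + Y₁(b) − 1, where Y₁(x) = max(x − (L+1), 0). (Case (i): when a token with value strictly above the ceiling L+1 meets a token with value at most the floor L, the Lyapunov function Y₁ decreases by at least 1.) -/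
/-!
Write `Y x = max (x - (L + 1)) 0`. Since `b ≤ L`, `Y b = 0`. If the smaller near-average `b'`
stays at most `L`, only `a'` contributes, and `a' ≤ a - 1` because `a - b ≥ 2`; as `Y` has slope
one above `L + 1`, this costs at least one. Otherwise both near-averages lie above `L + 1`, so the
new value is `a + b - 2 (L + 1) ≤ Y a - 1`, the near-averages preserving the sum.
-/

theorem Int.ceil_add_floor_intCast_div_two {k : Type*} [Field k] [LinearOrder k]
    [IsStrictOrderedRing k] [FloorRing k] (n : ℤ) : ⌈(n : k) / 2⌉ + ⌊(n : k) / 2⌋ = n := by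
  have hfloor (m : ℤ) : ⌊(m : k) / 2⌋ = m / 2 := by
    simpa using Int.floor_div_natCast (m : k) 2
  rw [← neg_neg ⌈(n : k) / 2⌉, ← Int.floor_neg, ← neg_div, ← Int.cast_neg, hfloor, hfloor]
  omega

theorem max_sub_add_max_sub_le_of_near_average {L a b a' b' : ℤ} (ha : L + 2 ≤ a) (hb : b ≤ L)
    (hsum : a' + b' = a + b) (hle : b' ≤ a') (hle' : a' ≤ b' + 1) :
    max (a' - (L + 1)) 0 + max (b' - (L + 1)) 0 ≤
      max (a - (L + 1)) 0 + max (b - (L + 1)) 0 - 1 := by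
  have hYb : max (b - (L + 1)) 0 = 0 := max_eq_right (by omega)
  have hYa : max (a - (L + 1)) 0 = a - (L + 1) := max_eq_left (by omega)
  rw [hYb, hYa]
  rcases le_or_gt b' L with hb' | hb'
  · have ha' : a' ≤ a - 1 := by omega
    rw [max_eq_right (a := b' - (L + 1)) (by omega)]
    omega
  · rw [max_eq_left (a := b' - (L + 1)) (by omega), max_eq_left (a := a' - (L + 1)) (by omega)]
    omega

/-- Case (i): when a token with value strictly above the ceiling `L+1` meets a token with
value at most the floor `L`, the Lyapunov function `Y₁` decreases by at least 1. -/
theorem stmt_6 (L a b : ℤ) (ha : a ≥ L + 2) (hb : b ≤ L) (a' b' : ℤ)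
    (ha' : a' = ⌈((a : ℚ) + (b : ℚ)) / 2⌉) (hb' : b' = ⌊((a : ℚ) + (b : ℚ)) / 2⌋) :
    max (a' - (L + 1)) 0 + max (b' - (L + 1)) 0 ≤
      max (a - (L + 1)) 0 + max (b - (L + 1)) 0 - 1 := by
  subst ha' hb'
  refine max_sub_add_max_sub_le_of_near_average ha hb ?_ (Int.floor_le_ceil _)
    (Int.ceil_le_floor_add_one _)
  exact_mod_cast Int.ceil_add_floor_intCast_div_two (k := ℚ) (a + b)
end

section
/- Let L, a, b be integers with a ≤ L − 1 and b ≥ L + 1, and let a' = ⌈(a+b)/2⌉ and b' = ⌊(a+b)/2⌋ be the near-averages of a and b. Then Y₂(a') + Y₂(b') ≤ Y₂(a) + Y₂(b) − 1, where Y₂(x) = max(L − x, 0). (Case (ii): when a token with value strictly below the floor L meets a token with value at least the ceiling L+1, the Lyapunov function Y₂ decreases by at least 1.) -/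
/-!
Only `a` lies below `L`, so the right-hand side is `L - a - 1`. Both near-averages lie strictly
above `a` (because `b ≥ a + 2`) and sum to `a + b`: if both are at least `L` the left-hand side
vanishes, if both are at most `L` it is `2L - a - b ≤ L - a - 1`, and otherwise it is `L - x` for
the one near-average `x < L`, which is at most `L - a - 1`.
-/

theorem floor_intCast_add_div_two (a b : ℤ) : ⌊((a : ℚ) + b) / 2⌋ = (a + b) / 2 := by
  exact_mod_cast Rat.floor_intCast_div_natCast (a + b) 2

theorem ceil_intCast_add_div_two (a b : ℤ) : ⌈((a : ℚ) + b) / 2⌉ = -(-(a + b) / 2) := by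
  exact_mod_cast Rat.ceil_intCast_div_natCast (a + b) 2

theorem max_sub_add_max_sub_le_sub_one {L a b a' b' : ℤ} (ha : a < L) (hb : L < b)
    (hsum : a' + b' = a + b) (ha' : a < a') (hb' : a < b') :
    max (L - a') 0 + max (L - b') 0 ≤ max (L - a) 0 + max (L - b) 0 - 1 := by
  omega

/-- Case (ii): when a token with value strictly below the floor `L` meets a token with
value at least the ceiling `L+1`, the Lyapunov function `Y₂` decreases by at least 1. -/
theorem stmt_7 (L a b : ℤ) (ha : a ≤ L - 1) (hb : b ≥ L + 1) (a' b' : ℤ)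
    (ha' : a' = ⌈((a : ℚ) + (b : ℚ)) / 2⌉) (hb' : b' = ⌊((a : ℚ) + (b : ℚ)) / 2⌋) :
    max (L - a') 0 + max (L - b') 0 ≤ max (L - a) 0 + max (L - b) 0 - 1 := by
  rw [ceil_intCast_add_div_two] at ha'
  rw [floor_intCast_add_div_two] at hb'
  exact max_sub_add_max_sub_le_sub_one (by omega) (by omega) (by omega) (by omega) (by omega)
end

section
/- Let L, a, b be integers with a ≥ L + 2 and b ≤ L − 1, and let a' = ⌈(a+b)/2⌉ and b' = ⌊(a+b)/2⌋ be the near-averages of a and b. Then both Y₁(a') + Y₁(b') ≤ Y₁(a) + Y₁(b) − 1 and Y₂(a') + Y₂(b') ≤ Y₂(a) + Y₂(b) − 1, where Y₁(x) = max(x − (L+1), 0) and Y₂(x) = max(L − x, 0). (Case (iii) for a non-integer average, where the ceiling L+1 strictly exceeds the floor L: when a token with value strictly above the ceiling meets a token with value strictly below the floor, both Lyapunov functions decrease by at least 1.) -/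
/-!
The near-averages are `b' = (a + b) / 2` and `a' = (a + b + 1) / 2` in integer division, so they
have the same sum as `a, b` and differ by at most one. Since `a ≥ L + 2` and `b ≤ L - 1`, both
lie strictly between `b` and `a`, which makes each of `Y₁`, `Y₂` drop by at least one.
-/

section NearAverage

variable {K : Type*} [Field K] [LinearOrder K] [IsStrictOrderedRing K] [FloorRing K]

theorem Int.floor_intCast_div_two (n : ℤ) : ⌊(n : K) / 2⌋ = n / 2 := by
  simpa using Int.floor_div_natCast (n : K) 2

theorem Int.ceil_intCast_div_two (n : ℤ) : ⌈(n : K) / 2⌉ = (n + 1) / 2 := by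
  rw [← neg_neg ⌈_⌉, ← Int.floor_neg, ← neg_div, ← Int.cast_neg, Int.floor_intCast_div_two]
  omega

end NearAverage

/-- Case (iii), non-integer average: when a token with value strictly above the ceiling
`L+1` meets a token with value strictly below the floor `L`, both `Y₁` and `Y₂` decrease
by at least 1. -/
theorem stmt_8 (L a b : ℤ) (ha : a ≥ L + 2) (hb : b ≤ L - 1) (a' b' : ℤ)
    (ha' : a' = ⌈((a : ℚ) + (b : ℚ)) / 2⌉) (hb' : b' = ⌊((a : ℚ) + (b : ℚ)) / 2⌋) :
    (max (a' - (L + 1)) 0 + max (b' - (L + 1)) 0 ≤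
        max (a - (L + 1)) 0 + max (b - (L + 1)) 0 - 1) ∧
      (max (L - a') 0 + max (L - b') 0 ≤ max (L - a) 0 + max (L - b) 0 - 1) := by
  rw [← Int.cast_add, Int.ceil_intCast_div_two] at ha'
  rw [← Int.cast_add, Int.floor_intCast_div_two] at hb'
  omega
end

section
/- Let L, a, b be integers with a ≥ L + 1 and b ≤ L − 1, and let a' = ⌈(a+b)/2⌉ and b' = ⌊(a+b)/2⌋ be the near-averages of a and b. Then both max(a' − L, 0) + max(b' − L, 0) ≤ max(a − L, 0) + max(b − L, 0) − 1 and max(L − a', 0) + max(L − b', 0) ≤ max(L − a, 0) + max(L − b, 0) − 1. (Case (iii) for an integer average, where ceiling and floor coincide at L: when a token strictly above L meets a token strictly below L, both the excess above L and the deficit below L decrease by at least 1.) -/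
/-!
The sum of the near-averages is `a + b`, and since `a - b ≥ 2` both of them lie strictly
between `b` and `a`. A pair of integers with the same sum as `(a, b)` and both strictly below
`a` has total excess above `L` at most `a - L - 1` when `b < L < a`; the deficit bound is the
excess bound for `(-a, -b)` and the threshold `-L`.
-/

theorem floor_add_ceil_half {K : Type*} [Field K] [LinearOrder K] [IsStrictOrderedRing K]
    [FloorRing K] (n : ℤ) : ⌊(n : K) / 2⌋ + ⌈(n : K) / 2⌉ = n := by
  have h : -((n : K) / 2) = (n : K) / 2 - n := by ring
  have := Int.floor_neg (a := (n : K) / 2)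
  rw [h, Int.floor_sub_intCast] at this
  omega

theorem max_sub_add_max_sub_le_of_lt {L a b x y : ℤ} (ha : L < a) (hb : b < L) (hx : x < a)
    (hy : y < a) (hxy : x + y = a + b) :
    max (x - L) 0 + max (y - L) 0 ≤ max (a - L) 0 + max (b - L) 0 - 1 := by
  omega

theorem max_sub_add_max_sub_le_of_gt {L a b x y : ℤ} (ha : L < a) (hb : b < L) (hx : b < x)
    (hy : b < y) (hxy : x + y = a + b) :
    max (L - x) 0 + max (L - y) 0 ≤ max (L - a) 0 + max (L - b) 0 - 1 := by
  have := max_sub_add_max_sub_le_of_lt (L := -L) (a := -b) (b := -a) (x := -x) (y := -y)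
    (by omega) (by omega) (by omega) (by omega) (by omega)
  simp only [sub_neg_eq_add, neg_add_eq_sub] at this
  linarith

/-- Case (iii), integer average: when a token strictly above `L` meets a token strictly
below `L`, both the excess above `L` and the deficit below `L` decrease by at least 1. -/
theorem stmt_9 (L a b : ℤ) (ha : a ≥ L + 1) (hb : b ≤ L - 1) (a' b' : ℤ)
    (ha' : a' = ⌈((a : ℚ) + (b : ℚ)) / 2⌉) (hb' : b' = ⌊((a : ℚ) + (b : ℚ)) / 2⌋) :
    (max (a' - L) 0 + max (b' - L) 0 ≤ max (a - L) 0 + max (b - L) 0 - 1) ∧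
      (max (L - a') 0 + max (L - b') 0 ≤ max (L - a) 0 + max (L - b) 0 - 1) := by
  have hab : (b : ℚ) + 2 ≤ a := by exact_mod_cast (by omega : b + 2 ≤ a)
  have hsum : b' + a' = a + b := by
    rw [ha', hb', ← floor_add_ceil_half (K := ℚ) (a + b), Int.cast_add]
  have ha'_lt : a' < a := by
    rw [ha', Int.ceil_lt_iff]
    linarith
  have hb'_gt : b < b' := by
    rw [hb', Int.lt_floor_iff]
    linarith
  have hb'_le : b' ≤ a' := ha' ▸ hb' ▸ Int.floor_le_ceil _
  exact ⟨max_sub_add_max_sub_le_of_lt (by omega) (by omega) ha'_lt (by omega) (by omega),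
    max_sub_add_max_sub_le_of_gt (by omega) (by omega) (by omega) hb'_gt (by omega)⟩
end

section
/- Let n ≥ 2 and l₀ ≥ 1 be natural numbers and c a real number with 0 < c ≤ 1. Let B : ℕ → (n×n real matrices) be a sequence of column-stochastic matrices such that (B k) j j ≥ c for every time step k and every node j, and let E be a strongly connected digraph on the n nodes such that for every m ∈ ℕ and every edge of E from j to l there exists a time step k with m ≤ k < m + l₀ and (B k) l j ≥ c (each edge of E is active, with weight at least c, at least once in every window of l₀ consecutive steps). Then every entry of the backward product B(l₀(n−1)−1) ⋯ B(1) · B(0) is at least c^{l₀(n−1)}. (This is the dynamic-topology random walk bound: over a time-varying digraph whose edges all appear within every window of l₀ steps, the probability that a token started at any node j is at any node i after l₀(n−1) steps is at least (1 + D⁺_max)^{−l₀(n−1)} when c = (1 + D⁺_max)^{−1}.) -/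
/-!
Fix the target column `j` and let `S t` be the set of nodes `a` whose entry `(a, j)` of the
product of the first `t` matrices is at least `c ^ t`. Since the diagonal weights are at least `c`,
`S t` only grows, and `j ∈ S 0`. An entry at least `c` of `B t` from `b ∈ S t` to `a` puts `a` into
`S (t + 1)`. As long as `S m` is not everything, strong connectivity yields an edge of `E` entering
`S m` from outside, and this edge is active during `[m, m + l₀)`; so `S` gains a node in every
window of `l₀` steps and after `l₀ (n - 1)` steps contains all `n` nodes.
-/

open Finset

theorem Relation.TransGen.exists_rel_not_of {α : Type*} {r : α → α → Prop} {p : α → Prop}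
    {a b : α} (h : Relation.TransGen r a b) (ha : ¬ p a) (hb : p b) :
    ∃ x y, ¬ p x ∧ p y ∧ r x y := by
  induction h with
  | single hab => exact ⟨a, _, ha, hb, hab⟩
  | @tail c d _ hcd ih =>
    by_cases hc : p c
    · exact ih hc
    · exact ⟨c, d, hc, hb, hcd⟩

section GrowingFinsets

variable {ι : Type*} [Fintype ι] {S : ℕ → Finset ι}

theorem Finset.min_card_add_le_card_of_monotone (hS : Monotone S) {l : ℕ}
    (hgrow : ∀ m, S m ≠ univ → S m ⊂ S (m + l)) (r : ℕ) :
    min (Fintype.card ι) (#(S 0) + r) ≤ #(S (l * r)) := by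
  induction r with
  | zero => simp
  | succ r ih =>
    rw [Nat.mul_succ]
    by_cases huniv : S (l * r) = univ
    · have : S (l * r + l) = univ := eq_univ_of_forall fun x =>
        hS (Nat.le_add_right _ _) (huniv ▸ mem_univ x)
      simp [this]
    · have := card_lt_card (hgrow _ huniv)
      omega

theorem Finset.eq_univ_of_monotone_of_ssubset_add (hS : Monotone S) {l : ℕ}
    (hgrow : ∀ m, S m ≠ univ → S m ⊂ S (m + l)) (h0 : (S 0).Nonempty) :
    S (l * (Fintype.card ι - 1)) = univ := by
  have hle := min_card_add_le_card_of_monotone hS hgrow (Fintype.card ι - 1)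
  have hpos := h0.card_pos
  have hcard := card_le_univ (S (l * (Fintype.card ι - 1)))
  exact eq_univ_of_card _ (by omega)

end GrowingFinsets

section BackwardProduct

variable {ι : Type*} [Fintype ι] [DecidableEq ι] {B : ℕ → Matrix ι ι ℝ} {c : ℝ}

def backwardProd (B : ℕ → Matrix ι ι ℝ) (t : ℕ) : Matrix ι ι ℝ :=
  ((List.range t).reverse.map B).prod

@[simp]
theorem backwardProd_zero : backwardProd B 0 = 1 := rfl

theorem backwardProd_succ (t : ℕ) : backwardProd B (t + 1) = B t * backwardProd B t := by
  simp [backwardProd, List.range_succ]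

theorem backwardProd_nonneg (hB : ∀ k a b, 0 ≤ B k a b) (t : ℕ) (a b : ι) :
    0 ≤ backwardProd B t a b := by
  induction t generalizing a b with
  | zero => simp [Matrix.one_apply, apply_ite]
  | succ t ih =>
    rw [backwardProd_succ, Matrix.mul_apply]
    exact sum_nonneg fun q _ => mul_nonneg (hB t a q) (ih q b)

theorem pow_succ_le_backwardProd_succ (hB : ∀ k a b, 0 ≤ B k a b) (hc : 0 ≤ c) {t : ℕ}
    {a b j : ι} (hab : c ≤ B t a b) (hbj : c ^ t ≤ backwardProd B t b j) :
    c ^ (t + 1) ≤ backwardProd B (t + 1) a j := by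
  rw [backwardProd_succ, Matrix.mul_apply]
  calc c ^ (t + 1) = c * c ^ t := pow_succ' c t
    _ ≤ B t a b * backwardProd B t b j :=
      mul_le_mul hab hbj (pow_nonneg hc t) (hc.trans hab)
    _ ≤ ∑ q, B t a q * backwardProd B t q j :=
      single_le_sum (f := fun q => B t a q * backwardProd B t q j)
        (fun q _ => mul_nonneg (hB t a q) (backwardProd_nonneg hB t q j)) (mem_univ b)

open Classical in
noncomputable def heavyRows (B : ℕ → Matrix ι ι ℝ) (c : ℝ) (j : ι) (t : ℕ) : Finset ι :=
  {a | c ^ t ≤ backwardProd B t a j}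

theorem mem_heavyRows {j a : ι} {t : ℕ} :
    a ∈ heavyRows B c j t ↔ c ^ t ≤ backwardProd B t a j := by
  simp [heavyRows]

theorem self_mem_heavyRows_zero (j : ι) : j ∈ heavyRows B c j 0 := by
  simp [mem_heavyRows]

theorem heavyRows_monotone (hB : ∀ k a b, 0 ≤ B k a b) (hc : 0 ≤ c)
    (hdiag : ∀ k a, c ≤ B k a a) (j : ι) : Monotone (heavyRows B c j) :=
  monotone_nat_of_le_succ fun t _ ha =>
    mem_heavyRows.2 (pow_succ_le_backwardProd_succ hB hc (hdiag t _) (mem_heavyRows.1 ha))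

theorem heavyRows_ssubset_add (hB : ∀ k a b, 0 ≤ B k a b) (hc : 0 ≤ c)
    (hdiag : ∀ k a, c ≤ B k a a) {E : ι → ι → Prop}
    (hconn : ∀ a b, a ≠ b → Relation.TransGen E b a) {l : ℕ}
    (hactive : ∀ m a b, E a b → ∃ k, m ≤ k ∧ k < m + l ∧ c ≤ B k a b) (j : ι) (m : ℕ)
    (hm : heavyRows B c j m ≠ univ) :
    heavyRows B c j m ⊂ heavyRows B c j (m + l) := by
  have hmono := heavyRows_monotone hB hc hdiag j
  have hj : j ∈ heavyRows B c j m := hmono (Nat.zero_le m) (self_mem_heavyRows_zero j)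
  obtain ⟨x, hx⟩ := not_forall.1 (mt eq_univ_of_forall hm)
  obtain ⟨a, b, ha, hb, hab⟩ :=
    (hconn j x (ne_of_mem_of_not_mem hj hx)).exists_rel_not_of hx hj
  obtain ⟨k, hmk, hkl, hcab⟩ := hactive m a b hab
  have hbk : b ∈ heavyRows B c j k := hmono hmk hb
  have hak : a ∈ heavyRows B c j (k + 1) :=
    mem_heavyRows.2 (pow_succ_le_backwardProd_succ hB hc hcab (mem_heavyRows.1 hbk))
  exact (ssubset_iff_of_subset (hmono (Nat.le_add_right m l))).2 ⟨a, hmono hkl hak, ha⟩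

end BackwardProduct

theorem stmt_15_general (n l₀ : ℕ) (c : ℝ) (hc0 : 0 < c)
    (B : ℕ → Matrix (Fin n) (Fin n) ℝ)
    (hnonneg : ∀ k l j, 0 ≤ B k l j)
    (hdiag : ∀ k j, c ≤ B k j j)
    (E : Fin n → Fin n → Prop)
    (hconn : ∀ i j : Fin n, i ≠ j → Relation.TransGen E j i)
    (hactive : ∀ m : ℕ, ∀ l j : Fin n, E l j → ∃ k, m ≤ k ∧ k < m + l₀ ∧ c ≤ B k l j) :
    ∀ i j : Fin n,
      c ^ (l₀ * (n - 1)) ≤ (((List.range (l₀ * (n - 1))).reverse.map B).prod) i j := by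
  intro i j
  have huniv : heavyRows B c j (l₀ * (Fintype.card (Fin n) - 1)) = univ :=
    eq_univ_of_monotone_of_ssubset_add (heavyRows_monotone hnonneg hc0.le hdiag j)
      (heavyRows_ssubset_add hnonneg hc0.le hdiag hconn hactive j)
      ⟨j, self_mem_heavyRows_zero j⟩
  rw [Fintype.card_fin] at huniv
  exact mem_heavyRows.1 (huniv ▸ mem_univ i)

/-- Dynamic-topology random walk bound: if each edge of a strongly connected digraph is
active (with weight at least `c`) at least once in every window of `l₀` consecutive steps,
and all diagonal weights are at least `c`, then every entry of the backward product of the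
first `l₀(n-1)` column-stochastic matrices is at least `c^(l₀(n-1))`. -/
theorem stmt_15 (n l₀ : ℕ) (hn : 2 ≤ n) (hl : 1 ≤ l₀) (c : ℝ) (hc0 : 0 < c) (hc1 : c ≤ 1)
    (B : ℕ → Matrix (Fin n) (Fin n) ℝ)
    (hnonneg : ∀ k l j, 0 ≤ B k l j) (hcol : ∀ k j, ∑ l, B k l j = 1)
    (hdiag : ∀ k j, c ≤ B k j j)
    (E : Fin n → Fin n → Prop) (hirr : ∀ j, ¬ E j j)
    (hconn : ∀ i j : Fin n, i ≠ j → Relation.TransGen E j i)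
    (hactive : ∀ m : ℕ, ∀ l j : Fin n, E l j → ∃ k, m ≤ k ∧ k < m + l₀ ∧ c ≤ B k l j) :
    ∀ i j : Fin n,
      c ^ (l₀ * (n - 1)) ≤ (((List.range (l₀ * (n - 1))).reverse.map B).prod) i j :=
  stmt_15_general n l₀ c hc0 B hnonneg hdiag E hconn hactive
end

section
/- Let n ≥ 2 and M ≥ 1 be natural numbers and c a real number with 0 < c ≤ 1. Let B₁, …, B_M be n×n column-stochastic matrices, each satisfying (B_θ) j j ≥ c for every node j, and let E be a strongly connected digraph on the n nodes such that for every edge of E from j to l there exists θ with (B_θ) l j ≥ c. Let p₁, …, p_M be positive reals with Σ_θ p_θ = 1 and p_min = min_θ p_θ. Then every entry of the matrix power (Σ_θ p_θ B_θ)^{n−1} is at least (p_min · c)^{n−1}. (This is the i.i.d. dynamic-topology bound: when at each step one of the digraphs G_{d_θ} is selected independently with probability p_θ and the union graph is strongly connected, the probability that a token is at any given node after n−1 steps is at least (p_min/(1 + D⁺_max))^{n−1}, with c = (1 + D⁺_max)^{−1}.) -/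
/-!
Write `A = ∑ θ, p θ • B θ`. Every diagonal entry of `A` and every entry on an edge of `E` is at
least `d = p_min · c`, so by expanding the product, `(A ^ k) i j ≥ d ^ k` as soon as `i` reaches
`j` in at most `k` steps (staying put counts as a step). Strong connectivity makes every node reach
`j` within `n - 1` steps: as long as some node cannot yet reach `j` in `k` steps, a path from it
to `j` crosses an edge into the set of nodes that can, so that set gains a node at step `k + 1`.
-/

open Finset

def ReachWithin {α : Type*} (E : α → α → Prop) : ℕ → α → α → Prop
  | 0, i, j => i = j
  | k + 1, i, j => ReachWithin E k i j ∨ ∃ l, E i l ∧ ReachWithin E k l j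

namespace ReachWithin

variable {α : Type*} {E : α → α → Prop}

theorem refl (k : ℕ) (j : α) : ReachWithin E k j j := by
  induction k with
  | zero => rfl
  | succ k ih => exact Or.inl ih

theorem succ {k : ℕ} {i j : α} (h : ReachWithin E k i j) :
    ReachWithin E (k + 1) i j :=
  Or.inl h

end ReachWithin

open Relation in
theorem Relation.TransGen.exists_edge_into {α : Type*} {E : α → α → Prop} {S : α → Prop}
    {i j : α} (h : TransGen E i j) (hi : ¬ S i) (hj : S j) : ∃ a b, E a b ∧ ¬ S a ∧ S b := by
  induction h using TransGen.head_induction_on with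
  | single hab => exact ⟨_, _, hab, hi, hj⟩
  | @head a b hab _ ih =>
    by_cases hb : S b
    · exact ⟨a, b, hab, hi, hb⟩
    · exact ih hb

section Reachability

variable {α : Type*} [Fintype α] {E : α → α → Prop} {j : α}

open Classical in
theorem min_le_card_reachWithin (hconn : ∀ i, i ≠ j → Relation.TransGen E i j) (k : ℕ) :
    min (k + 1) (Fintype.card α) ≤ #(univ.filter (ReachWithin E k · j)) := by
  induction k with
  | zero => exact (min_le_left _ _).trans (card_pos.2 ⟨j, by simpa using ReachWithin.refl 0 j⟩)
  | succ k ih =>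
    have hsub : univ.filter (ReachWithin E k · j) ⊆ univ.filter (ReachWithin E (k + 1) · j) :=
      monotone_filter_right _ fun _ _ => ReachWithin.succ
    by_cases hall : ∀ i, ReachWithin E k i j
    · refine (min_le_right _ _).trans (le_of_eq ?_)
      simp [hall, ReachWithin.succ]
    obtain ⟨i₀, hi₀⟩ := not_forall.1 hall
    have hi₀j : i₀ ≠ j := by rintro rfl; exact hi₀ (ReachWithin.refl k i₀)
    obtain ⟨a, b, hab, ha, hb⟩ :=
      (hconn i₀ hi₀j).exists_edge_into (S := (ReachWithin E k · j)) hi₀ (ReachWithin.refl k j)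
    have hnew : a ∈ univ.filter (ReachWithin E (k + 1) · j) \ univ.filter (ReachWithin E k · j) := by
      simp only [mem_sdiff, mem_filter, mem_univ, true_and]
      exact ⟨Or.inr ⟨b, hab, hb⟩, ha⟩
    have hlt := card_lt_card (Finset.ssubset_iff_subset_ne.2 ⟨hsub, fun h => by simp [h] at hnew⟩)
    omega

theorem reachWithin_card_sub_one (hconn : ∀ i, i ≠ j → Relation.TransGen E i j) (i : α) :
    ReachWithin E (Fintype.card α - 1) i j := by
  classical
  have hcard := min_le_card_reachWithin hconn (Fintype.card α - 1)
  have huniv : univ.filter (ReachWithin E (Fintype.card α - 1) · j) = univ :=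
    eq_univ_of_card _ (le_antisymm (card_le_univ _) (by have := Fintype.card_pos_iff.2 ⟨j⟩; omega))
  simpa using eq_univ_iff_forall.1 huniv i

end Reachability

namespace Matrix

variable {ι n R : Type*} [Semiring R] [PartialOrder R] [IsOrderedRing R]

theorem pow_le_pow_apply_of_reachWithin [Fintype n] [DecidableEq n] {A : Matrix n n R}
    {E : n → n → Prop} {d : R} (hA : ∀ i j, 0 ≤ A i j) (hd : 0 ≤ d) (hdiag : ∀ i, d ≤ A i i)
    (hedge : ∀ i j, E i j → d ≤ A i j) :
    ∀ {k : ℕ} {i j : n}, ReachWithin E k i j → d ^ k ≤ (A ^ k) i j := by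
  intro k
  induction k with
  | zero => rintro i j rfl; simp
  | succ k ih =>
    have step : ∀ {i l j}, d ≤ A i l → d ^ k ≤ (A ^ k) l j → d ^ (k + 1) ≤ (A ^ (k + 1)) i j := by
      intro i l j hil hlj
      rw [pow_succ', pow_succ', mul_apply]
      calc d * d ^ k ≤ A i l * (A ^ k) l j := mul_le_mul hil hlj (pow_nonneg hd k) (hA i l)
        _ ≤ ∑ m, A i m * (A ^ k) m j :=
          single_le_sum (fun m _ => mul_nonneg (hA i m) (pow_apply_nonneg hA k m j)) (mem_univ l)
    rintro i j (h | ⟨l, hil, h⟩)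
    · exact step (hdiag i) (ih h)
    · exact step (hedge i l hil) (ih h)

variable [Fintype ι] {p : ι → R} {B : ι → Matrix n n R}

theorem sum_smul_apply_nonneg (hp : ∀ θ, 0 ≤ p θ) (hB : ∀ θ i j, 0 ≤ B θ i j) (i j : n) :
    0 ≤ (∑ θ, p θ • B θ) i j := by
  simp only [sum_apply, smul_apply, smul_eq_mul]
  exact sum_nonneg fun θ _ => mul_nonneg (hp θ) (hB θ i j)

theorem mul_apply_le_sum_smul_apply (hp : ∀ θ, 0 ≤ p θ) (hB : ∀ θ i j, 0 ≤ B θ i j)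
    (θ : ι) (i j : n) : p θ * B θ i j ≤ (∑ θ, p θ • B θ) i j := by
  simp only [sum_apply, smul_apply, smul_eq_mul]
  exact single_le_sum (fun θ _ => mul_nonneg (hp θ) (hB θ i j)) (mem_univ θ)

end Matrix

theorem stmt_16_general (n M : ℕ) (c : ℝ) (hc0 : 0 < c)
    (B : Fin M → Matrix (Fin n) (Fin n) ℝ)
    (hnonneg : ∀ θ l j, 0 ≤ B θ l j)
    (hdiag : ∀ θ j, c ≤ B θ j j)
    (E : Fin n → Fin n → Prop)
    (hconn : ∀ i j : Fin n, i ≠ j → Relation.TransGen E j i)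
    (hcover : ∀ l j : Fin n, E l j → ∃ θ, c ≤ B θ l j)
    (p : Fin M → ℝ) (hp : ∀ θ, 0 < p θ)
    (pmin : ℝ) (hpmin : IsLeast (Set.range p) pmin) :
    ∀ i j : Fin n, (pmin * c) ^ (n - 1) ≤ ((∑ θ, p θ • B θ) ^ (n - 1)) i j := by
  intro i j
  obtain ⟨θ₀, rfl⟩ := hpmin.1
  have hp' : ∀ θ, 0 ≤ p θ := fun θ => (hp θ).le
  have hcover_weight : ∀ θ a b, c ≤ B θ a b → p θ₀ * c ≤ (∑ θ, p θ • B θ) a b := fun θ a b h =>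
    (mul_le_mul (hpmin.2 ⟨θ, rfl⟩) h hc0.le (hp' θ)).trans
      (Matrix.mul_apply_le_sum_smul_apply hp' hnonneg θ a b)
  simpa using Matrix.pow_le_pow_apply_of_reachWithin (Matrix.sum_smul_apply_nonneg hp' hnonneg)
    (mul_nonneg (hp' θ₀) hc0.le) (fun a => hcover_weight θ₀ a a (hdiag θ₀ a))
    (fun a b hab => (hcover a b hab).elim fun θ => hcover_weight θ a b)
    (reachWithin_card_sub_one (fun i' hi' => hconn j i' hi'.symm) i)

/-- I.i.d. dynamic-topology bound: if at each step one of `M` column-stochastic matrices is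
selected with probability `p θ`, each has diagonal at least `c`, and each edge of a strongly
connected digraph is covered by some matrix with weight at least `c`, then every entry of
`(∑ θ, p θ • B θ)^(n-1)` is at least `(p_min · c)^(n-1)`. -/
theorem stmt_16 (n M : ℕ) (hn : 2 ≤ n) (hM : 1 ≤ M) (c : ℝ) (hc0 : 0 < c) (hc1 : c ≤ 1)
    (B : Fin M → Matrix (Fin n) (Fin n) ℝ)
    (hnonneg : ∀ θ l j, 0 ≤ B θ l j) (hcol : ∀ θ j, ∑ l, B θ l j = 1)
    (hdiag : ∀ θ j, c ≤ B θ j j)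
    (E : Fin n → Fin n → Prop) (hirr : ∀ j, ¬ E j j)
    (hconn : ∀ i j : Fin n, i ≠ j → Relation.TransGen E j i)
    (hcover : ∀ l j : Fin n, E l j → ∃ θ, c ≤ B θ l j)
    (p : Fin M → ℝ) (hp : ∀ θ, 0 < p θ) (hpsum : ∑ θ, p θ = 1)
    (pmin : ℝ) (hpmin : IsLeast (Set.range p) pmin) :
    ∀ i j : Fin n, (pmin * c) ^ (n - 1) ≤ ((∑ θ, p θ • B θ) ^ (n - 1)) i j :=
  stmt_16_general n M c hc0 B hnonneg hdiag E hconn hcover p hp pmin hpmin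
end
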